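/- arXiv:2601.21705 — 2 statements merged into one kernel-verified Lean document; each statement's English description precedes it below -/
import Mathlib

section
/- For every ρ > 0 the function V_ρ satisfies V_ρ''(x) < 0 for all x ∈ (0, b*_ρ) (V_ρ is strictly concave on (0, b*_ρ)) and V_ρ'(x) ≥ 1 for all x > 0. -/
open Real Set Filter

noncomputable def gam1 (μ σ ρ : ℝ) : ℝ := Real.sqrt (μ^2/σ^4 + 2*ρ/σ^2) - μ/σ^2

noncomputable def gam2 (μ σ ρ : ℝ) : ℝ := -Real.sqrt (μ^2/σ^4 + 2*ρ/σ^2) - μ/σ^2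

/-- The classical optimal dividend boundary `b*_ρ`. -/
noncomputable def bstar (μ σ ρ : ℝ) : ℝ :=
  Real.log ((gam2 μ σ ρ)^2 / (gam1 μ σ ρ)^2) / (gam1 μ σ ρ - gam2 μ σ ρ)

/-- The classical value function `V_ρ`. -/
noncomputable def Vfun (μ σ ρ x : ℝ) : ℝ :=
  if x < bstar μ σ ρ then
    (Real.exp (gam1 μ σ ρ * x) - Real.exp (gam2 μ σ ρ * x)) /
      (gam1 μ σ ρ * Real.exp (gam1 μ σ ρ * bstar μ σ ρ) -
        gam2 μ σ ρ * Real.exp (gam2 μ σ ρ * bstar μ σ ρ))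
  else
    (Real.exp (gam1 μ σ ρ * bstar μ σ ρ) - Real.exp (gam2 μ σ ρ * bstar μ σ ρ)) /
      (gam1 μ σ ρ * Real.exp (gam1 μ σ ρ * bstar μ σ ρ) -
        gam2 μ σ ρ * Real.exp (gam2 μ σ ρ * bstar μ σ ρ)) + x - bstar μ σ ρ

/-- `δ(y) = e^{γ₁(r+q)y} − e^{γ₂(r+q)y}`. -/
noncomputable def del (μ σ r q y : ℝ) : ℝ :=
  Real.exp (gam1 μ σ (r+q) * y) - Real.exp (gam2 μ σ (r+q) * y)

/-- `δ'(y)`. -/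
noncomputable def delP (μ σ r q y : ℝ) : ℝ :=
  gam1 μ σ (r+q) * Real.exp (gam1 μ σ (r+q) * y) -
    gam2 μ σ (r+q) * Real.exp (gam2 μ σ (r+q) * y)

/-- `δ''(y)`. -/
noncomputable def delPP (μ σ r q y : ℝ) : ℝ :=
  (gam1 μ σ (r+q))^2 * Real.exp (gam1 μ σ (r+q) * y) -
    (gam2 μ σ (r+q))^2 * Real.exp (gam2 μ σ (r+q) * y)

/-- `y_u := b*_{r+q} + μ/r − μ/(r+q)`. -/
noncomputable def yUpper (μ σ r q : ℝ) : ℝ := bstar μ σ (r+q) + μ/r - μ/(r+q)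

/-- `Δ(y)`. -/
noncomputable def DeltaF (μ σ r q y : ℝ) : ℝ :=
  (1/(gam1 μ σ r - gam2 μ σ r)) *
    Real.log ((gam2 μ σ r)^2 * (delP μ σ r q y - gam1 μ σ r * del μ σ r q y) /
      ((gam1 μ σ r)^2 * (delP μ σ r q y - gam2 μ σ r * del μ σ r q y)))

/-- `b*(y) = y + Δ(y)`. -/
noncomputable def bstarY (μ σ r q y : ℝ) : ℝ := y + DeltaF μ σ r q y

noncomputable def psiF (μ σ ρ x : ℝ) : ℝ := Real.exp (gam1 μ σ ρ * x)
noncomputable def phiF (μ σ ρ x : ℝ) : ℝ := Real.exp (gam2 μ σ ρ * x)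
noncomputable def psiP (μ σ ρ x : ℝ) : ℝ := gam1 μ σ ρ * Real.exp (gam1 μ σ ρ * x)
noncomputable def phiP (μ σ ρ x : ℝ) : ℝ := gam2 μ σ ρ * Real.exp (gam2 μ σ ρ * x)

/-- `η(y;b) = ψ'_r(b)φ_r(y) − φ'_r(b)ψ_r(y)`. -/
noncomputable def etaF (μ σ r y b : ℝ) : ℝ :=
  psiP μ σ r b * phiF μ σ r y - phiP μ σ r b * psiF μ σ r y

/-- `η'(y;b)` (derivative in `y`). -/
noncomputable def etaP (μ σ r y b : ℝ) : ℝ :=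
  psiP μ σ r b * phiP μ σ r y - phiP μ σ r b * psiP μ σ r y

/-- `K₁(y)`. -/
noncomputable def K1 (μ σ r q y : ℝ) : ℝ :=
  (psiF μ σ r y * etaP μ σ r y (bstarY μ σ r q y) -
    psiP μ σ r y * etaF μ σ r y (bstarY μ σ r q y)) /
  (psiP μ σ r (bstarY μ σ r q y) *
    (del μ σ r q y * etaP μ σ r y (bstarY μ σ r q y) -
      delP μ σ r q y * etaF μ σ r y (bstarY μ σ r q y)))

/-- `K₂(y) = −K₁(y)`. -/
noncomputable def K2 (μ σ r q y : ℝ) : ℝ := -K1 μ σ r q y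

/-- `K₃(y)`. -/
noncomputable def K3 (μ σ r q y : ℝ) : ℝ :=
  (phiP μ σ r (bstarY μ σ r q y) *
      (del μ σ r q y * psiP μ σ r y - delP μ σ r q y * psiF μ σ r y) +
    del μ σ r q y * etaP μ σ r y (bstarY μ σ r q y) -
      delP μ σ r q y * etaF μ σ r y (bstarY μ σ r q y)) /
  (psiP μ σ r (bstarY μ σ r q y) *
    (del μ σ r q y * etaP μ σ r y (bstarY μ σ r q y) -
      delP μ σ r q y * etaF μ σ r y (bstarY μ σ r q y)))

/-- `K₄(y)`. -/
noncomputable def K4 (μ σ r q y : ℝ) : ℝ :=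
  (psiF μ σ r y * delP μ σ r q y - psiP μ σ r y * del μ σ r q y) /
  (del μ σ r q y * etaP μ σ r y (bstarY μ σ r q y) -
    delP μ σ r q y * etaF μ σ r y (bstarY μ σ r q y))

/-- The candidate value function `w(·;y)` in the subcritical regime. -/
noncomputable def wfun (μ σ r q y x : ℝ) : ℝ :=
  if x < y then
    K1 μ σ r q y * Real.exp (gam1 μ σ (r+q) * x) + K2 μ σ r q y * Real.exp (gam2 μ σ (r+q) * x)
  else if x < bstarY μ σ r q y then
    K3 μ σ r q y * Real.exp (gam1 μ σ r * x) + K4 μ σ r q y * Real.exp (gam2 μ σ r * x)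
  else
    K3 μ σ r q y * Real.exp (gam1 μ σ r * bstarY μ σ r q y) +
      K4 μ σ r q y * Real.exp (gam2 μ σ r * bstarY μ σ r q y) + x - bstarY μ σ r q y

/-- The function `f` characterising the critical level `y_l`. -/
noncomputable def fF (μ σ r q y : ℝ) : ℝ :=
  (-(gam1 μ σ r / gam2 μ σ r) * delP μ σ r q y + gam1 μ σ r * del μ σ r q y) *
    ((gam2 μ σ r)^2/(gam1 μ σ r)^2 *
      ((delP μ σ r q y - gam1 μ σ r * del μ σ r q y) /
        (delP μ σ r q y - gam2 μ σ r * del μ σ r q y)))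
      ^ (gam1 μ σ r / (gam1 μ σ r - gam2 μ σ r))
  - delP μ σ r q (bstar μ σ (r+q))

noncomputable def e1F (μ σ r q b : ℝ) : ℝ :=
  (phiF μ σ (r+q) b - phiP μ σ (r+q) b * Vfun μ σ (r+q) b) /
  (psiP μ σ (r+q) b * phiF μ σ (r+q) b - psiF μ σ (r+q) b * phiP μ σ (r+q) b)

noncomputable def e2F (μ σ r q b : ℝ) : ℝ :=
  (psiP μ σ (r+q) b * Vfun μ σ (r+q) b - psiF μ σ (r+q) b) /
  (psiP μ σ (r+q) b * phiF μ σ (r+q) b - psiF μ σ (r+q) b * phiP μ σ (r+q) b)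

noncomputable def e3F (μ σ r q b y : ℝ) : ℝ :=
  (e1F μ σ r q b * (phiF μ σ r y * psiP μ σ (r+q) y - phiP μ σ r y * psiF μ σ (r+q) y) +
    e2F μ σ r q b * (phiF μ σ r y * phiP μ σ (r+q) y - phiP μ σ r y * phiF μ σ (r+q) y)) /
  (psiP μ σ r y * phiF μ σ r y - psiF μ σ r y * phiP μ σ r y)

noncomputable def e4F (μ σ r q b y : ℝ) : ℝ :=
  (e1F μ σ r q b * (psiP μ σ r y * psiF μ σ (r+q) y - psiF μ σ r y * psiP μ σ (r+q) y) +
    e2F μ σ r q b * (psiP μ σ r y * phiF μ σ (r+q) y - psiF μ σ r y * phiP μ σ (r+q) y)) /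
  (psiP μ σ r y * phiF μ σ r y - psiF μ σ r y * phiP μ σ r y)

/-- The function `H(b,y)` from the critical regime. -/
noncomputable def Hfun (μ σ r q b y : ℝ) : ℝ :=
  (gam1 μ σ r - gam2 μ σ r) *
    (-gam2 μ σ r / gam1 μ σ r) ^ ((gam1 μ σ r + gam2 μ σ r)/(gam1 μ σ r - gam2 μ σ r)) *
    (e3F μ σ r q b y) ^ (-gam2 μ σ r/(gam1 μ σ r - gam2 μ σ r)) *
    (-e4F μ σ r q b y) ^ (gam1 μ σ r/(gam1 μ σ r - gam2 μ σ r))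

/-- `Λ(b,y) = −e₄(b,y)/e₃(b,y)`. -/
noncomputable def Lamfun (μ σ r q b y : ℝ) : ℝ := -e4F μ σ r q b y / e3F μ σ r q b y

/-- `L(y)`. -/
noncomputable def Lfun (μ σ r q y : ℝ) : ℝ :=
  (1/(gam1 μ σ r - gam2 μ σ r)) *
    Real.log ((gam2 μ σ r)^2/(gam1 μ σ r)^2 * Lamfun μ σ r q y y) - y

/-!
With `δ(x) = e^{γ₁x} − e^{γ₂x}`, the value function is `δ / δ'(b*)` below `b*` and has slope `1`
above it. Since `|μ|/σ² < √(μ²/σ⁴ + 2ρ/σ²)` we have `γ₂ < 0 < γ₁`, so `δ' > 0`, and `b*` is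
exactly the zero of `δ'' = γ₁²e^{γ₁x} − γ₂²e^{γ₂x}`, which is negative to its left. Hence
`V'' = δ''/δ'(b*) < 0` below `b*`, and `δ'` decreases to `δ'(b*)` there, so `V' = δ'/δ'(b*) ≥ 1`.
-/

lemma abs_div_sq_lt_sqrt {μ σ ρ : ℝ} (hσ : 0 < σ) (hρ : 0 < ρ) :
    |μ / σ ^ 2| < √(μ ^ 2 / σ ^ 4 + 2 * ρ / σ ^ 2) := by
  rw [← sqrt_sq_eq_abs]
  apply sqrt_lt_sqrt (sq_nonneg _)
  have : 0 < 2 * ρ / σ ^ 2 := by positivity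
  linarith [show (μ / σ ^ 2) ^ 2 = μ ^ 2 / σ ^ 4 by ring]

lemma gam1_pos {μ σ ρ : ℝ} (hσ : 0 < σ) (hρ : 0 < ρ) : 0 < gam1 μ σ ρ := by
  have := abs_div_sq_lt_sqrt (μ := μ) hσ hρ
  unfold gam1
  linarith [le_abs_self (μ / σ ^ 2)]

lemma gam2_neg {μ σ ρ : ℝ} (hσ : 0 < σ) (hρ : 0 < ρ) : gam2 μ σ ρ < 0 := by
  have := abs_div_sq_lt_sqrt (μ := μ) hσ hρ
  unfold gam2
  linarith [neg_abs_le (μ / σ ^ 2)]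

lemma sq_mul_exp_lt_sq_mul_exp {g₁ g₂ x : ℝ} (h₁ : 0 < g₁) (h₂ : g₂ < 0)
    (hx : x < log (g₂ ^ 2 / g₁ ^ 2) / (g₁ - g₂)) :
    g₁ ^ 2 * exp (g₁ * x) < g₂ ^ 2 * exp (g₂ * x) := by
  have hratio : 0 < g₂ ^ 2 / g₁ ^ 2 := by have := h₂.ne; positivity
  have hexp : exp ((g₁ - g₂) * x) < g₂ ^ 2 / g₁ ^ 2 := by
    rw [← lt_log_iff_exp_lt hratio, mul_comm]
    exact (lt_div_iff₀ (by linarith)).1 hx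
  calc g₁ ^ 2 * exp (g₁ * x) = g₁ ^ 2 * exp ((g₁ - g₂) * x) * exp (g₂ * x) := by
        rw [mul_assoc, ← exp_add]; ring_nf
    _ < g₁ ^ 2 * (g₂ ^ 2 / g₁ ^ 2) * exp (g₂ * x) := by gcongr
    _ = g₂ ^ 2 * exp (g₂ * x) := by field_simp

lemma hasDerivAt_exp_mul (a x : ℝ) : HasDerivAt (fun y => exp (a * y)) (a * exp (a * x)) x := by
  simpa [mul_comm] using ((hasDerivAt_id x).const_mul a).exp

section ValueFunction

variable {μ σ ρ : ℝ}

lemma hasDerivAt_psiF_sub_phiF (x : ℝ) :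
    HasDerivAt (fun y => psiF μ σ ρ y - phiF μ σ ρ y) (psiP μ σ ρ x - phiP μ σ ρ x) x :=
  (hasDerivAt_exp_mul _ x).sub (hasDerivAt_exp_mul _ x)

lemma hasDerivAt_psiP_sub_phiP (x : ℝ) :
    HasDerivAt (fun y => psiP μ σ ρ y - phiP μ σ ρ y)
      (gam1 μ σ ρ * psiP μ σ ρ x - gam2 μ σ ρ * phiP μ σ ρ x) x :=
  ((hasDerivAt_exp_mul _ x).const_mul _).sub ((hasDerivAt_exp_mul _ x).const_mul _)

lemma psiP_sub_phiP_pos (h₁ : 0 < gam1 μ σ ρ) (h₂ : gam2 μ σ ρ < 0) (x : ℝ) :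
    0 < psiP μ σ ρ x - phiP μ σ ρ x := by
  have := mul_pos h₁ (exp_pos (gam1 μ σ ρ * x))
  have := mul_neg_of_neg_of_pos h₂ (exp_pos (gam2 μ σ ρ * x))
  unfold psiP phiP
  linarith

lemma gam1_mul_psiP_sub_gam2_mul_phiP_neg (h₁ : 0 < gam1 μ σ ρ) (h₂ : gam2 μ σ ρ < 0)
    {x : ℝ} (hx : x < bstar μ σ ρ) :
    gam1 μ σ ρ * psiP μ σ ρ x - gam2 μ σ ρ * phiP μ σ ρ x < 0 := by
  have := sq_mul_exp_lt_sq_mul_exp h₁ h₂ hx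
  unfold psiP phiP
  linarith

lemma strictAntiOn_psiP_sub_phiP (h₁ : 0 < gam1 μ σ ρ) (h₂ : gam2 μ σ ρ < 0) :
    StrictAntiOn (fun x => psiP μ σ ρ x - phiP μ σ ρ x) (Iic (bstar μ σ ρ)) := by
  refine strictAntiOn_of_deriv_neg (convex_Iic _)
    (fun x _ => (hasDerivAt_psiP_sub_phiP x).continuousAt.continuousWithinAt) fun x hx => ?_
  rw [interior_Iic] at hx
  rw [(hasDerivAt_psiP_sub_phiP x).deriv]
  exact gam1_mul_psiP_sub_gam2_mul_phiP_neg h₁ h₂ hx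

lemma Vfun_of_lt {x : ℝ} (hx : x < bstar μ σ ρ) :
    Vfun μ σ ρ x = (psiF μ σ ρ x - phiF μ σ ρ x) /
      (psiP μ σ ρ (bstar μ σ ρ) - phiP μ σ ρ (bstar μ σ ρ)) :=
  if_pos hx

lemma Vfun_of_le {x : ℝ} (hx : bstar μ σ ρ ≤ x) :
    Vfun μ σ ρ x = (psiF μ σ ρ (bstar μ σ ρ) - phiF μ σ ρ (bstar μ σ ρ)) /
      (psiP μ σ ρ (bstar μ σ ρ) - phiP μ σ ρ (bstar μ σ ρ)) + x - bstar μ σ ρ :=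
  if_neg hx.not_gt

lemma hasDerivAt_Vfun (h₁ : 0 < gam1 μ σ ρ) (h₂ : gam2 μ σ ρ < 0) (x : ℝ) :
    HasDerivAt (Vfun μ σ ρ)
      (if x < bstar μ σ ρ then
        (psiP μ σ ρ x - phiP μ σ ρ x) / (psiP μ σ ρ (bstar μ σ ρ) - phiP μ σ ρ (bstar μ σ ρ))
      else 1) x := by
  set b := bstar μ σ ρ
  set D := psiP μ σ ρ b - phiP μ σ ρ b
  have below : ∀ y ≤ b, HasDerivWithinAt (Vfun μ σ ρ) ((psiP μ σ ρ y - phiP μ σ ρ y) / D)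
      (Iic b) y := fun y hy =>
    ((hasDerivAt_psiF_sub_phiF y).div_const D).hasDerivWithinAt.congr_of_mem
      (fun z hz => by
        rcases (mem_Iic.1 hz).lt_or_eq with hz | rfl
        · exact Vfun_of_lt hz
        · rw [Vfun_of_le le_rfl, add_sub_cancel_right]) hy
  have above : ∀ y, b ≤ y → HasDerivWithinAt (Vfun μ σ ρ) 1 (Ici b) y := fun y hy =>
    (((hasDerivAt_id y).const_add _).sub_const b).hasDerivWithinAt.congr_of_mem
      (fun z hz => Vfun_of_le hz) hy
  rcases lt_trichotomy x b with hx | rfl | hx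
  · rw [if_pos hx]
    exact (below x hx.le).hasDerivAt (Iic_mem_nhds hx)
  · -- smooth fit: the slope of the exponential branch at `b` is `D / D = 1`
    rw [if_neg (lt_irrefl _)]
    have below_b := below b le_rfl
    rw [div_self (psiP_sub_phiP_pos h₁ h₂ b).ne'] at below_b
    rw [← hasDerivWithinAt_univ, ← Iic_union_Ici]
    exact below_b.union (above b le_rfl)
  · rw [if_neg hx.not_gt]
    exact (above x hx.le).hasDerivAt (Ici_mem_nhds hx)

lemma deriv_deriv_Vfun_neg (h₁ : 0 < gam1 μ σ ρ) (h₂ : gam2 μ σ ρ < 0) {x : ℝ}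
    (hx : x < bstar μ σ ρ) : deriv (deriv (Vfun μ σ ρ)) x < 0 := by
  have hderiv : deriv (Vfun μ σ ρ) =ᶠ[nhds x] fun y => (psiP μ σ ρ y - phiP μ σ ρ y) /
      (psiP μ σ ρ (bstar μ σ ρ) - phiP μ σ ρ (bstar μ σ ρ)) :=
    eventually_of_mem (Iio_mem_nhds hx) fun y hy => by
      rw [(hasDerivAt_Vfun h₁ h₂ y).deriv, if_pos (mem_Iio.1 hy)]
  rw [hderiv.deriv_eq, ((hasDerivAt_psiP_sub_phiP x).div_const _).deriv]
  exact div_neg_of_neg_of_pos (gam1_mul_psiP_sub_gam2_mul_phiP_neg h₁ h₂ hx)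
    (psiP_sub_phiP_pos h₁ h₂ _)

lemma one_le_deriv_Vfun (h₁ : 0 < gam1 μ σ ρ) (h₂ : gam2 μ σ ρ < 0) (x : ℝ) :
    1 ≤ deriv (Vfun μ σ ρ) x := by
  rw [(hasDerivAt_Vfun h₁ h₂ x).deriv]
  split_ifs with hx
  · rw [one_le_div (psiP_sub_phiP_pos h₁ h₂ _)]
    exact (strictAntiOn_psiP_sub_phiP h₁ h₂ hx.le self_mem_Iic hx).le
  · exact le_rfl

end ValueFunction

theorem stmt4_general (μ σ : ℝ) (hσ : 0 < σ)
    (ρ : ℝ) (hρ : 0 < ρ) :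
    (∀ x ∈ Set.Ioo 0 (bstar μ σ ρ), deriv (deriv (Vfun μ σ ρ)) x < 0) ∧
    (∀ x, 0 < x → 1 ≤ deriv (Vfun μ σ ρ) x) :=
  ⟨fun _ hx => deriv_deriv_Vfun_neg (gam1_pos hσ hρ) (gam2_neg hσ hρ) hx.2,
    fun x _ => one_le_deriv_Vfun (gam1_pos hσ hρ) (gam2_neg hσ hρ) x⟩

/-- `V_ρ'' < 0` on `(0,b*_ρ)` and `V_ρ' ≥ 1` on `(0,∞)`. -/
theorem stmt4 (μ σ r q : ℝ) (hμ : 0 < μ) (hσ : 0 < σ) (hr : 0 < r) (hq : 0 < q)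
    (ρ : ℝ) (hρ : 0 < ρ) :
    (∀ x ∈ Set.Ioo 0 (bstar μ σ ρ), deriv (deriv (Vfun μ σ ρ)) x < 0) ∧
    (∀ x, 0 < x → 1 ≤ deriv (Vfun μ σ ρ) x) :=
  stmt4_general μ σ hσ ρ hρ
end

section
/- Let ρ > 0 and x̄ ≥ 0, and let f : [x̄,∞) → ℝ be twice continuously differentiable with (σ²/2)f''(x) + μ·f'(x) − ρ·f(x) = 0 for all x > x̄, f(x̄) ≥ 0 and f'(x̄) > 0. Then f is three times differentiable on (x̄,∞), and for every x̃ > x̄ with f''(x̃) = 0 one has f'''(x̃) > 0; consequently there exists ε > 0 such that f''(x) < 0 for x ∈ (x̃−ε, x̃) and f''(x) > 0 for x ∈ (x̃, x̃+ε). Hence at an inflection point f can only switch from concave on the left to convex on the right. -/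
open Real Set Filter

/-!
Rewriting the ODE as `f'' = (2/σ²)(ρ f − μ f')` shows that `f''` is differentiable with
`f''' = (2/σ²)(ρ f' − μ f'')`, so at a zero of `f''` the sign of `f'''` is that of `f'`.
Hence everything reduces to `f' > 0` on `(x̄, ∞)`. If not, let `c` be the first zero of `f'`:
`f` increases on `[x̄, c]`, so `f c > f x̄ ≥ 0` and the ODE gives `f'' c = 2ρ f(c)/σ² > 0`;
but then `f'` would be negative just to the left of `c`.
-/

open Topology

theorem exists_sign_change_of_deriv_pos {g : ℝ → ℝ} {x₀ : ℝ} (hg : 0 < deriv g x₀)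
    (hx₀ : g x₀ = 0) :
    ∃ ε > 0, (∀ x ∈ Ioo (x₀ - ε) x₀, g x < 0) ∧ (∀ x ∈ Ioo x₀ (x₀ + ε), 0 < g x) := by
  obtain ⟨ε, hε, hsign⟩ :=
    Metric.eventually_nhds_iff_ball.1 (eventually_nhdsWithin_sign_eq_of_deriv_pos hg hx₀)
  refine ⟨ε, hε, fun x hx => ?_, fun x hx => ?_⟩
  · have h := hsign x (by rw [Real.ball_eq_Ioo]; exact ⟨hx.1, by linarith [hx.2]⟩)
    rwa [sign_neg (sub_neg.2 hx.2), sign_eq_neg_one_iff] at h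
  · have h := hsign x (by rw [Real.ball_eq_Ioo]; exact ⟨by linarith [hx.1], hx.2⟩)
    rwa [sign_pos (sub_pos.2 hx.1), sign_eq_one_iff] at h

theorem exists_first_zero_of_pos_of_nonpos {g : ℝ → ℝ} {a b : ℝ} (hab : a ≤ b)
    (hg : ContinuousOn g (Icc a b)) (ha : 0 < g a) (hb : g b ≤ 0) :
    ∃ c ∈ Ioc a b, g c = 0 ∧ ∀ x ∈ Ico a c, 0 < g x := by
  set Z := Icc a b ∩ g ⁻¹' Iic 0
  have hZ : IsClosed Z := hg.preimage_isClosed_of_isClosed isClosed_Icc isClosed_Iic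
  have hbZ : b ∈ Z := ⟨⟨hab, le_rfl⟩, hb⟩
  have hZbdd : BddBelow Z := ⟨a, fun x hx => hx.1.1⟩
  have hcZ : sInf Z ∈ Z := hZ.csInf_mem ⟨b, hbZ⟩ hZbdd
  have hcb : sInf Z ≤ b := hcZ.1.2
  have hpos : ∀ x ∈ Ico a (sInf Z), 0 < g x := fun x hx => by
    by_contra! hgx
    exact (csInf_le hZbdd ⟨⟨hx.1, hx.2.le.trans hcb⟩, hgx⟩).not_gt hx.2
  have hac : a < sInf Z := lt_of_le_of_ne hcZ.1.1 fun h => (h ▸ hcZ.2 : g a ≤ 0).not_gt ha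
  obtain ⟨x, hx, hgx⟩ :=
    intermediate_value_Icc' hcZ.1.1 (hg.mono (Icc_subset_Icc_right hcb)) ⟨hcZ.2, ha.le⟩
  have hxc : x = sInf Z := le_antisymm hx.2 (csInf_le hZbdd ⟨⟨hx.1, hx.2.trans hcb⟩, hgx.le⟩)
  exact ⟨sInf Z, ⟨hac, hcb⟩, hxc ▸ hgx, hpos⟩

section DividendODE

variable {μ σ ρ xbar : ℝ} {f : ℝ → ℝ}

theorem deriv_deriv_eq_of_ode (hσ : 0 < σ)
    (hODE : ∀ x, xbar < x → σ^2/2 * deriv (deriv f) x + μ * deriv f x - ρ * f x = 0)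
    {x : ℝ} (hx : xbar < x) :
    deriv (deriv f) x = 2 / σ^2 * (ρ * f x - μ * deriv f x) := by
  field_simp
  linarith [hODE x hx]

theorem hasDerivAt_deriv_deriv_of_ode (hσ : 0 < σ) (hf : ContDiffOn ℝ 2 f (Ioi xbar))
    (hODE : ∀ x, xbar < x → σ^2/2 * deriv (deriv f) x + μ * deriv f x - ρ * f x = 0)
    {x : ℝ} (hx : xbar < x) :
    HasDerivAt (deriv (deriv f)) (2 / σ^2 * (ρ * deriv f x - μ * deriv (deriv f) x)) x := by
  have hxn : Ioi xbar ∈ 𝓝 x := isOpen_Ioi.mem_nhds hx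
  have hf' : HasDerivAt f (deriv f x) x :=
    ((hf.differentiableOn (by norm_num)).differentiableAt hxn).hasDerivAt
  have hf'' : HasDerivAt (deriv f) (deriv (deriv f) x) x :=
    (((hf.deriv_of_isOpen isOpen_Ioi (by norm_num : (1 : WithTop ℕ∞) + 1 ≤ 2)).differentiableOn
      one_ne_zero).differentiableAt hxn).hasDerivAt
  refine (((hf'.const_mul ρ).sub (hf''.const_mul μ)).const_mul (2 / σ^2)).congr_of_eventuallyEq ?_
  filter_upwards [hxn] with y hy using deriv_deriv_eq_of_ode hσ hODE hy

theorem deriv_pos_of_ode (hσ : 0 < σ) (hρ : 0 < ρ) (hf : ContDiffOn ℝ 2 f (Ici xbar))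
    (hODE : ∀ x, xbar < x → σ^2/2 * deriv (deriv f) x + μ * deriv f x - ρ * f x = 0)
    (hf0 : 0 ≤ f xbar) (hf1 : 0 < derivWithin f (Ici xbar) xbar) {x : ℝ} (hx : xbar < x) :
    0 < deriv f x := by
  have hg_eq : ∀ y, xbar < y → derivWithin f (Ici xbar) y = deriv f y := fun y hy =>
    derivWithin_of_mem_nhds (mem_of_superset (Ioi_mem_nhds hy) Ioi_subset_Ici_self)
  have hg : ContinuousOn (derivWithin f (Ici xbar)) (Ici xbar) :=
    hf.continuousOn_derivWithin (uniqueDiffOn_Ici xbar) (by norm_num)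
  by_contra! hx'
  obtain ⟨c, hc, hgc, hpos⟩ := exists_first_zero_of_pos_of_nonpos hx.le
    (hg.mono Icc_subset_Ici_self) hf1 (by rwa [hg_eq x hx])
  have hf'c : deriv f c = 0 := hg_eq c hc.1 ▸ hgc
  have hfc : 0 < f c := by
    have hmono : StrictMonoOn f (Icc xbar c) :=
      strictMonoOn_of_deriv_pos (convex_Icc _ _) (hf.continuousOn.mono Icc_subset_Ici_self)
        fun y hy => by
          rw [interior_Icc] at hy
          exact hg_eq y hy.1 ▸ hpos y ⟨hy.1.le, hy.2⟩
    exact hf0.trans_lt (hmono (left_mem_Icc.2 hc.1.le) (right_mem_Icc.2 hc.1.le) hc.1)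
  have hf''c : 0 < deriv (deriv f) c := by
    rw [deriv_deriv_eq_of_ode hσ hODE hc.1, hf'c, mul_zero, sub_zero]
    exact mul_pos (by positivity) (mul_pos hρ hfc)
  obtain ⟨ε, hε, hneg, -⟩ := exists_sign_change_of_deriv_pos hf''c hf'c
  set y := max (c - ε / 2) ((xbar + c) / 2)
  have hy_gt : xbar < y := lt_max_of_lt_right (by linarith [hc.1])
  have hy_lt : y < c := max_lt (by linarith) (by linarith [hc.1])
  have h_neg := hneg y ⟨lt_max_of_lt_left (by linarith), hy_lt⟩
  have h_pos := hg_eq y hy_gt ▸ hpos y ⟨hy_gt.le, hy_lt⟩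
  linarith

end DividendODE

theorem stmt7_general (μ σ : ℝ) (hσ : 0 < σ)
    (ρ : ℝ) (hρ : 0 < ρ) (xbar : ℝ)
    (f : ℝ → ℝ) (hf : ContDiffOn ℝ 2 f (Set.Ici xbar))
    (hODE : ∀ x, xbar < x → σ^2/2 * deriv (deriv f) x + μ * deriv f x - ρ * f x = 0)
    (hf0 : 0 ≤ f xbar) (hf1 : 0 < derivWithin f (Set.Ici xbar) xbar) :
    (∀ x ∈ Set.Ioi xbar, DifferentiableAt ℝ (deriv (deriv f)) x) ∧
    (∀ xt, xbar < xt → deriv (deriv f) xt = 0 →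
      0 < deriv (deriv (deriv f)) xt ∧
      ∃ ε > 0, (∀ x ∈ Set.Ioo (xt - ε) xt, deriv (deriv f) x < 0) ∧
        (∀ x ∈ Set.Ioo xt (xt + ε), 0 < deriv (deriv f) x)) := by
  have hf''' := fun x (hx : xbar < x) =>
    hasDerivAt_deriv_deriv_of_ode hσ (hf.mono Ioi_subset_Ici_self) hODE hx
  refine ⟨fun x hx => (hf''' x hx).differentiableAt, fun xt hxt hxt0 => ?_⟩
  have hpos : 0 < deriv (deriv (deriv f)) xt := by
    rw [(hf''' xt hxt).deriv, hxt0, mul_zero, sub_zero]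
    exact mul_pos (by positivity) (mul_pos hρ (deriv_pos_of_ode hσ hρ hf hODE hf0 hf1 hxt))
  exact ⟨hpos, exists_sign_change_of_deriv_pos hpos hxt0⟩

/-- under the hypotheses of STATEMENT 6, `f` is three times differentiable on
`(x̄,∞)` and at every `x̃ > x̄` with `f''(x̃)=0` one has `f'''(x̃)>0`; hence there is `ε>0`
with `f''<0` on `(x̃−ε,x̃)` and `f''>0` on `(x̃,x̃+ε)`. -/
theorem stmt7 (μ σ : ℝ) (hμ : 0 < μ) (hσ : 0 < σ)
    (ρ : ℝ) (hρ : 0 < ρ) (xbar : ℝ) (hxbar : 0 ≤ xbar)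
    (f : ℝ → ℝ) (hf : ContDiffOn ℝ 2 f (Set.Ici xbar))
    (hODE : ∀ x, xbar < x → σ^2/2 * deriv (deriv f) x + μ * deriv f x - ρ * f x = 0)
    (hf0 : 0 ≤ f xbar) (hf1 : 0 < derivWithin f (Set.Ici xbar) xbar) :
    (∀ x ∈ Set.Ioi xbar, DifferentiableAt ℝ (deriv (deriv f)) x) ∧
    (∀ xt, xbar < xt → deriv (deriv f) xt = 0 →
      0 < deriv (deriv (deriv f)) xt ∧
      ∃ ε > 0, (∀ x ∈ Set.Ioo (xt - ε) xt, deriv (deriv f) x < 0) ∧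
        (∀ x ∈ Set.Ioo xt (xt + ε), 0 < deriv (deriv f) x)) :=
  stmt7_general μ σ hσ ρ hρ xbar f hf hODE hf0 hf1
end
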